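/- arXiv:2107.10535 — 2 statements merged into one kernel-verified Lean document; each statement's English description precedes it below -/
import Mathlib

section
/- Let (μ_n) be a sequence of probability measures on ℝ^d such that the convolutions μ_n * N_ϱ (with a fixed Gaussian N_ϱ = N(0, ϱ²I_d), ϱ > 0) have uniformly integrable second moments, i.e. sup_n ∫_{|y| ≥ k} |y|² d(μ_n * N_ϱ)(y) → 0 as k → ∞. Then the sequence (μ_n) itself has uniformly integrable second moments: sup_n ∫_{|x| ≥ k} |x|² dμ_n(x) → 0 as k → ∞. -/
open MeasureTheory

noncomputable def W2sq {E : Type*} [NormedAddCommGroup E] [MeasurableSpace E]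
    (μ ν : Measure E) : ℝ :=
  sInf {r : ℝ | ∃ π : Measure (E × E), π.map Prod.fst = μ ∧ π.map Prod.snd = ν ∧
    r = ∫ p, ‖p.1 - p.2‖ ^ 2 ∂π}

noncomputable def W2 {E : Type*} [NormedAddCommGroup E] [MeasurableSpace E]
    (μ ν : Measure E) : ℝ :=
  Real.sqrt (W2sq μ ν)

noncomputable def mconv {E : Type*} [MeasurableSpace E] [Add E] (μ ν : Measure E) : Measure E :=
  μ.bind fun x => ν.map fun y => x + y

noncomputable def gaussPi (d : ℕ) (ϱ : ℝ) : Measure (EuclideanSpace ℝ (Fin d)) :=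
  (Measure.pi fun _ : Fin d => ProbabilityTheory.gaussianReal 0 (Real.toNNReal (ϱ ^ 2))).map
    (MeasurableEquiv.toLp 2 (Fin d → ℝ))

/-! If `ν` gives mass at least `1/2` to the ball of radius `r` and `‖x‖ ≥ k ≥ 2r`, then
`‖x + g‖ ≥ ‖x‖ / 2 ≥ k / 2` with `ν`-probability at least `1/2`; integrating in `x`, the second
moment of `μ` beyond `k` is at most `8` times that of `μ * ν` beyond `k / 2`. Since the Gaussian has
finite second moment, `μ` and `μ * ν` have infinite tail moments simultaneously, and tails of `μ`
bounded uniformly in `n` give tails of `μ * ν` bounded uniformly in `n`; this takes care of the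
junk values of the real integrals and suprema in the statement. -/

open ENNReal ProbabilityTheory Filter Metric Set

theorem norm_le_two_mul_norm_add {E : Type*} [SeminormedAddCommGroup E] {x g : E} {r : ℝ}
    (hg : ‖g‖ ≤ r) (hx : 2 * r ≤ ‖x‖) :
    ‖x‖ ≤ 2 * ‖x + g‖ := by
  have := norm_sub_norm_le x (-g)
  rw [sub_neg_eq_add, norm_neg] at this
  linarith

theorem tendsto_measure_closedBall_atTop {X : Type*} [PseudoMetricSpace X] [MeasurableSpace X]
    (ν : Measure X) (x : X) :
    Tendsto (fun r => ν (closedBall x r)) atTop (nhds (ν univ)) := by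
  have hU : ⋃ r : ℝ, closedBall x r = univ :=
    eq_univ_of_forall fun y => mem_iUnion.2 ⟨dist y x, mem_closedBall.2 le_rfl⟩
  have h := tendsto_measure_iUnion_atTop (μ := ν) (s := closedBall x)
    fun _ _ h => closedBall_subset_closedBall h
  rwa [hU] at h

theorem Real.iSup_le_mul_iSup {ι : Type*} {f g : ι → ℝ} {a b c : ℝ} (hc : 0 ≤ c) (ha : 0 ≤ a)
    (hg : ∀ i, 0 ≤ g i) (hfg : ∀ i, f i ≤ c * g i) (hgf : ∀ i, g i ≤ a * f i + b) :
    ⨆ i, f i ≤ c * ⨆ i, g i := by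
  have hsup : 0 ≤ c * ⨆ i, g i := mul_nonneg hc (Real.iSup_nonneg hg)
  by_cases hf : BddAbove (range f)
  · obtain ⟨B, hB⟩ := hf
    have hgB : BddAbove (range g) := ⟨a * B + b, forall_mem_range.2 fun i =>
      (hgf i).trans (by gcongr; exact hB (mem_range_self i))⟩
    exact Real.iSup_le (fun i => (hfg i).trans (by gcongr; exact le_ciSup hgB i)) hsup
  · rwa [Real.iSup_of_not_bddAbove hf]

section SecondMoment

variable {E : Type*} [NormedAddCommGroup E] [MeasurableSpace E]

noncomputable def secondMoment (μ : Measure E) : ℝ≥0∞ :=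
  ∫⁻ x, ENNReal.ofReal (‖x‖ ^ 2) ∂μ

noncomputable def tailSecondMoment (μ : Measure E) (c : ℝ) : ℝ≥0∞ :=
  ∫⁻ x in {x | c ≤ ‖x‖}, ENNReal.ofReal (‖x‖ ^ 2) ∂μ

theorem tailSecondMoment_le_secondMoment (μ : Measure E) (c : ℝ) :
    tailSecondMoment μ c ≤ secondMoment μ :=
  setLIntegral_le_lintegral _ _

theorem tailSecondMoment_anti (μ : Measure E) {c c' : ℝ} (h : c ≤ c') :
    tailSecondMoment μ c' ≤ tailSecondMoment μ c :=
  lintegral_mono_set fun _ hx => h.trans hx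

variable [OpensMeasurableSpace E]

theorem measurableSet_le_norm (c : ℝ) : MeasurableSet {x : E | c ≤ ‖x‖} :=
  measurableSet_le measurable_const measurable_norm

theorem secondMoment_le_tailSecondMoment_add (μ : Measure E) [IsProbabilityMeasure μ] (c : ℝ) :
    secondMoment μ ≤ tailSecondMoment μ c + ENNReal.ofReal (c ^ 2) := by
  rw [secondMoment, tailSecondMoment, ← lintegral_add_compl _ (measurableSet_le_norm c)]
  gcongr
  calc ∫⁻ x in {x : E | c ≤ ‖x‖}ᶜ, ENNReal.ofReal (‖x‖ ^ 2) ∂μ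
      ≤ ∫⁻ _ in {x : E | c ≤ ‖x‖}ᶜ, ENNReal.ofReal (c ^ 2) ∂μ := by
        refine setLIntegral_mono measurable_const fun x hx => ENNReal.ofReal_le_ofReal ?_
        have hx : ‖x‖ < c := not_le.1 hx
        nlinarith [norm_nonneg x]
    _ ≤ ENNReal.ofReal (c ^ 2) := by
        rw [setLIntegral_const]
        exact mul_le_of_le_one_right' prob_le_one

theorem tailSecondMoment_eq_top_iff (μ : Measure E) [IsProbabilityMeasure μ] (c : ℝ) :
    tailSecondMoment μ c = ⊤ ↔ secondMoment μ = ⊤ := by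
  refine ⟨fun h => top_le_iff.1 (h ▸ tailSecondMoment_le_secondMoment μ c), fun h => ?_⟩
  have := h ▸ secondMoment_le_tailSecondMoment_add μ c
  simpa using this

theorem integral_tail_eq_toReal (μ : Measure E) (c : ℝ) :
    ∫ x in {x | c ≤ ‖x‖}, ‖x‖ ^ 2 ∂μ = (tailSecondMoment μ c).toReal :=
  integral_eq_lintegral_of_nonneg_ae (ae_of_all _ fun _ => by positivity)
    (by fun_prop : Measurable fun x : E => ‖x‖ ^ 2).aestronglyMeasurable

end SecondMoment

section Convolution

theorem lintegral_mconv {E : Type*} [MeasurableSpace E] [AddMonoid E] [MeasurableAdd₂ E]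
    (μ ν : Measure E) [SFinite ν] {f : E → ℝ≥0∞} (hf : Measurable f) :
    ∫⁻ y, f y ∂(mconv μ ν) = ∫⁻ x, ∫⁻ g, f (x + g) ∂ν ∂μ := by
  have hker : Measurable fun x : E => ν.map (x + ·) := by
    refine Measure.measurable_of_measurable_coe _ fun s hs => ?_
    simp_rw [Measure.map_apply (measurable_const_add _) hs]
    exact measurable_measure_prodMk_left (measurable_add hs)
  rw [mconv, Measure.lintegral_bind hker.aemeasurable hf.aemeasurable]
  exact lintegral_congr fun x => lintegral_map hf (measurable_const_add x)

instance {E : Type*} [MeasurableSpace E] [AddMonoid E] [MeasurableAdd₂ E]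
    (μ ν : Measure E) [IsProbabilityMeasure μ] [IsProbabilityMeasure ν] :
    IsProbabilityMeasure (mconv μ ν) := by
  constructor
  rw [← setLIntegral_one, Measure.restrict_univ, lintegral_mconv μ ν measurable_const]
  simp

variable {E : Type*} [NormedAddCommGroup E] [MeasurableSpace E] [OpensMeasurableSpace E]
  [MeasurableAdd₂ E]

theorem secondMoment_mconv_le (μ ν : Measure E) [IsProbabilityMeasure μ]
    [IsProbabilityMeasure ν] :
    secondMoment (mconv μ ν) ≤ 2 * secondMoment μ + 2 * secondMoment ν := by
  have hsq : Measurable fun x : E => ENNReal.ofReal (‖x‖ ^ 2) := by fun_prop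
  have hadd : ∀ x g : E, ENNReal.ofReal (‖x + g‖ ^ 2)
      ≤ 2 * ENNReal.ofReal (‖x‖ ^ 2) + 2 * ENNReal.ofReal (‖g‖ ^ 2) := by
    intro x g
    have h : ‖x + g‖ ^ 2 ≤ 2 * ‖x‖ ^ 2 + 2 * ‖g‖ ^ 2 := by
      nlinarith [norm_add_le x g, norm_nonneg (x + g), sq_nonneg (‖x‖ - ‖g‖)]
    calc ENNReal.ofReal (‖x + g‖ ^ 2) ≤ ENNReal.ofReal (2 * ‖x‖ ^ 2 + 2 * ‖g‖ ^ 2) :=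
          ENNReal.ofReal_le_ofReal h
      _ = 2 * ENNReal.ofReal (‖x‖ ^ 2) + 2 * ENNReal.ofReal (‖g‖ ^ 2) := by
          rw [ENNReal.ofReal_add (by positivity) (by positivity),
            ENNReal.ofReal_mul zero_le_two, ENNReal.ofReal_mul zero_le_two, ENNReal.ofReal_ofNat]
  calc secondMoment (mconv μ ν) = ∫⁻ x, ∫⁻ g, ENNReal.ofReal (‖x + g‖ ^ 2) ∂ν ∂μ :=
        lintegral_mconv μ ν hsq
    _ ≤ ∫⁻ x, ∫⁻ g, (2 * ENNReal.ofReal (‖x‖ ^ 2) + 2 * ENNReal.ofReal (‖g‖ ^ 2)) ∂ν ∂μ :=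
        lintegral_mono fun x => lintegral_mono fun g => hadd x g
    _ = 2 * secondMoment μ + 2 * secondMoment ν := by
        simp_rw [lintegral_add_left measurable_const, lintegral_const, measure_univ, mul_one,
          lintegral_const_mul 2 hsq]
        rw [lintegral_add_right _ measurable_const, lintegral_const, measure_univ, mul_one,
          lintegral_const_mul 2 hsq, secondMoment, secondMoment]

theorem tailSecondMoment_le_mul_tailSecondMoment_mconv (μ ν : Measure E) [SFinite ν] {r k : ℝ}
    (hν : 2⁻¹ ≤ ν (closedBall 0 r)) (hrk : 2 * r ≤ k) :
    tailSecondMoment μ k ≤ 8 * tailSecondMoment (mconv μ ν) (k / 2) := by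
  set F : E → ℝ≥0∞ := {y : E | k / 2 ≤ ‖y‖}.indicator fun y => ENNReal.ofReal (‖y‖ ^ 2)
  have hF : Measurable F :=
    (by fun_prop : Measurable fun y : E => ENNReal.ofReal (‖y‖ ^ 2)).indicator
      (measurableSet_le_norm _)
  have hpoint : ∀ x ∈ {x : E | k ≤ ‖x‖}, ENNReal.ofReal (‖x‖ ^ 2) ≤ 8 * ∫⁻ g, F (x + g) ∂ν := by
    intro x hx
    have hball : ∀ g ∈ closedBall (0 : E) r, ENNReal.ofReal (‖x‖ ^ 2) ≤ 4 * F (x + g) := by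
      intro g hg
      have h := norm_le_two_mul_norm_add (mem_closedBall_zero_iff.1 hg) (hrk.trans hx)
      have hx' : k ≤ ‖x‖ := hx
      have hFxg : F (x + g) = ENNReal.ofReal (‖x + g‖ ^ 2) :=
        Set.indicator_of_mem (s := {y : E | k / 2 ≤ ‖y‖}) (show k / 2 ≤ ‖x + g‖ by linarith) _
      rw [hFxg, ← ENNReal.ofReal_ofNat 4, ← ENNReal.ofReal_mul zero_le_four]
      exact ENNReal.ofReal_le_ofReal (by nlinarith [norm_nonneg x])
    calc ENNReal.ofReal (‖x‖ ^ 2) = 2 * (2⁻¹ * ENNReal.ofReal (‖x‖ ^ 2)) := by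
          rw [← mul_assoc, ENNReal.mul_inv_cancel two_ne_zero ofNat_ne_top, one_mul]
      _ ≤ 2 * ∫⁻ _ in closedBall 0 r, ENNReal.ofReal (‖x‖ ^ 2) ∂ν := by
          rw [setLIntegral_const, mul_comm _ (ν _)]
          gcongr
      _ ≤ 2 * ∫⁻ g, 4 * F (x + g) ∂ν := by
          gcongr 2 * ?_
          exact (setLIntegral_mono' measurableSet_closedBall hball).trans
            (setLIntegral_le_lintegral _ _)
      _ = 8 * ∫⁻ g, F (x + g) ∂ν := by
          rw [lintegral_const_mul' 4 _ ofNat_ne_top, ← mul_assoc]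
          norm_num
  calc tailSecondMoment μ k ≤ ∫⁻ x in {x | k ≤ ‖x‖}, 8 * ∫⁻ g, F (x + g) ∂ν ∂μ :=
        setLIntegral_mono' (measurableSet_le_norm k) hpoint
    _ ≤ 8 * ∫⁻ x, ∫⁻ g, F (x + g) ∂ν ∂μ :=
        (setLIntegral_le_lintegral _ _).trans (lintegral_const_mul' 8 _ ofNat_ne_top).le
    _ = 8 * tailSecondMoment (mconv μ ν) (k / 2) := by
        rw [← lintegral_mconv μ ν hF, lintegral_indicator (measurableSet_le_norm _),
          tailSecondMoment]

end Convolution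

section Smoothing

variable {E : Type*} [NormedAddCommGroup E] [MeasurableSpace E] [OpensMeasurableSpace E]
  [MeasurableAdd₂ E] {μ ν : Measure E} [IsProbabilityMeasure μ] [IsProbabilityMeasure ν]
  {r m k : ℝ}

theorem tailSecondMoment_mconv_eq_top_iff (hν₂ : secondMoment ν ≠ ⊤)
    (hν : 2⁻¹ ≤ ν (closedBall 0 r)) (hrm : r ≤ m) (c : ℝ) :
    tailSecondMoment (mconv μ ν) m = ⊤ ↔ tailSecondMoment μ c = ⊤ := by
  rw [tailSecondMoment_eq_top_iff μ c]
  constructor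
  · intro h
    by_contra hμ
    refine (tailSecondMoment_le_secondMoment _ m).trans (secondMoment_mconv_le μ ν)
      |>.trans_lt ?_ |>.ne h
    exact add_lt_top.2 ⟨mul_lt_top ofNat_lt_top (lt_top_iff_ne_top.2 hμ),
      mul_lt_top ofNat_lt_top (lt_top_iff_ne_top.2 hν₂)⟩
  · intro h
    have hkey := tailSecondMoment_le_mul_tailSecondMoment_mconv μ ν hν
      (mul_le_mul_of_nonneg_left hrm zero_le_two)
    rw [(tailSecondMoment_eq_top_iff μ _).2 h, mul_div_cancel_left₀ m two_ne_zero] at hkey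
    exact (mul_eq_top.1 (top_le_iff.1 hkey)).elim (·.2) (absurd ·.1 ofNat_ne_top)

theorem integral_tail_le_mul_integral_tail_mconv (hν₂ : secondMoment ν ≠ ⊤)
    (hν : 2⁻¹ ≤ ν (closedBall 0 r)) (hrm : r ≤ m) (hmk : m ≤ k / 2) :
    ∫ x in {x | k ≤ ‖x‖}, ‖x‖ ^ 2 ∂μ ≤ 8 * ∫ y in {y | m ≤ ‖y‖}, ‖y‖ ^ 2 ∂(mconv μ ν) := by
  rw [integral_tail_eq_toReal, integral_tail_eq_toReal, ← toReal_ofNat 8, ← toReal_mul]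
  refine toReal_mono' ?_ fun h => by_contra fun hL =>
    mul_ne_top ofNat_ne_top (mt (tailSecondMoment_mconv_eq_top_iff hν₂ hν hrm k).1 hL) h
  exact (tailSecondMoment_le_mul_tailSecondMoment_mconv μ ν hν (by linarith)).trans
    (by gcongr; exact tailSecondMoment_anti _ hmk)

theorem integral_tail_mconv_le (hν₂ : secondMoment ν ≠ ⊤) (hν : 2⁻¹ ≤ ν (closedBall 0 r))
    (hrm : r ≤ m) :
    ∫ y in {y | m ≤ ‖y‖}, ‖y‖ ^ 2 ∂(mconv μ ν)
      ≤ 2 * ∫ x in {x | k ≤ ‖x‖}, ‖x‖ ^ 2 ∂μ + (2 * k ^ 2 + 2 * (secondMoment ν).toReal) := by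
  have hle : tailSecondMoment (mconv μ ν) m
      ≤ 2 * (tailSecondMoment μ k + ENNReal.ofReal (k ^ 2)) + 2 * secondMoment ν := by
    calc _ ≤ 2 * secondMoment μ + 2 * secondMoment ν :=
          (tailSecondMoment_le_secondMoment _ m).trans (secondMoment_mconv_le μ ν)
      _ ≤ _ := by gcongr; exact secondMoment_le_tailSecondMoment_add μ k
  have htop : 2 * (tailSecondMoment μ k + ENNReal.ofReal (k ^ 2)) + 2 * secondMoment ν = ⊤ →
      tailSecondMoment (mconv μ ν) m = ⊤ := fun h =>
    (tailSecondMoment_mconv_eq_top_iff hν₂ hν hrm k).2 <| by_contra fun hL => h.not_lt <|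
      add_lt_top.2 ⟨mul_lt_top ofNat_lt_top (add_lt_top.2 ⟨lt_top_iff_ne_top.2 hL, ofReal_lt_top⟩),
        mul_lt_top ofNat_lt_top (lt_top_iff_ne_top.2 hν₂)⟩
  rw [integral_tail_eq_toReal, integral_tail_eq_toReal]
  calc _ ≤ (2 * (tailSecondMoment μ k + ENNReal.ofReal (k ^ 2)) + 2 * secondMoment ν).toReal :=
        toReal_mono' hle htop
    _ ≤ 2 * ((tailSecondMoment μ k).toReal + k ^ 2) + 2 * (secondMoment ν).toReal := by
        refine toReal_add_le.trans ?_
        simp only [toReal_mul, toReal_ofNat]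
        gcongr
        exact toReal_add_le.trans_eq (by rw [toReal_ofReal (sq_nonneg k)])
    _ = _ := by ring

end Smoothing

instance (d : ℕ) (ϱ : ℝ) : IsProbabilityMeasure (gaussPi d ϱ) :=
  Measure.isProbabilityMeasure_map (MeasurableEquiv.measurable _).aemeasurable

theorem secondMoment_gaussPi_ne_top (d : ℕ) (ϱ : ℝ) : secondMoment (gaussPi d ϱ) ≠ ⊤ := by
  have hnorm : ∀ x : Fin d → ℝ, ENNReal.ofReal (‖MeasurableEquiv.toLp 2 (Fin d → ℝ) x‖ ^ 2)
      = ∑ i, ENNReal.ofReal (x i ^ 2) := fun x => by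
    rw [EuclideanSpace.norm_sq_eq, ENNReal.ofReal_sum_of_nonneg fun i _ => by positivity]
    simp [sq_abs]
  have hγ : ∫⁻ t, ENNReal.ofReal (t ^ 2) ∂(gaussianReal 0 (Real.toNNReal (ϱ ^ 2))) ≠ ⊤ :=
    (memLp_id_gaussianReal 2).integrable_sq.lintegral_lt_top.ne
  rw [secondMoment, gaussPi, lintegral_map (by fun_prop) (MeasurableEquiv.measurable _)]
  simp_rw [hnorm]
  rw [lintegral_finsetSum _ fun i _ => by fun_prop]
  refine sum_ne_top.2 fun i _ => ?_
  have hi := (measurePreserving_eval (fun _ : Fin d => gaussianReal 0 (Real.toNNReal (ϱ ^ 2))) i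
    ).lintegral_comp (f := fun t : ℝ => ENNReal.ofReal (t ^ 2)) (by fun_prop)
  exact hi.trans_ne hγ

theorem stmt_2_general {d : ℕ} (ϱ : ℝ)
    (μ : ℕ → Measure (EuclideanSpace ℝ (Fin d)))
    (hprob : ∀ n, IsProbabilityMeasure (μ n))
    (hUI : Filter.Tendsto
      (fun k : ℕ => ⨆ n : ℕ,
        ∫ y in {y : EuclideanSpace ℝ (Fin d) | (k : ℝ) ≤ ‖y‖}, ‖y‖ ^ 2 ∂(mconv (μ n) (gaussPi d ϱ)))
      Filter.atTop (nhds 0)) :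
    Filter.Tendsto
      (fun k : ℕ => ⨆ n : ℕ,
        ∫ x in {x : EuclideanSpace ℝ (Fin d) | (k : ℝ) ≤ ‖x‖}, ‖x‖ ^ 2 ∂(μ n))
      Filter.atTop (nhds 0) := by
  have hhalf := Nat.tendsto_div_const_atTop (n := 2) two_ne_zero
  have hball : ∀ᶠ k : ℕ in atTop, 2⁻¹ ≤ gaussPi d ϱ (closedBall 0 ((k / 2 : ℕ) : ℝ)) := by
    have h := tendsto_measure_closedBall_atTop (gaussPi d ϱ) 0
    rw [measure_univ] at h
    exact (tendsto_natCast_atTop_atTop.comp hhalf).eventually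
      ((h.eventually (eventually_gt_nhds (ENNReal.inv_lt_one.2 one_lt_two))).mono fun _ => le_of_lt)
  have hG := secondMoment_gaussPi_ne_top d ϱ
  refine squeeze_zero'
    (Eventually.of_forall fun k => Real.iSup_nonneg fun n => integral_nonneg fun x => by positivity)
    (hball.mono fun k hk => Real.iSup_le_mul_iSup (by norm_num) zero_le_two
      (fun n => integral_nonneg fun x => by positivity)
      (fun n => integral_tail_le_mul_integral_tail_mconv hG hk le_rfl Nat.cast_div_le)
      (fun n => integral_tail_mconv_le hG hk le_rfl))
    (by simpa using (hUI.comp hhalf).const_mul 8)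

/-- Uniform integrability of second moments transfers from the Gaussian-smoothed
measures back to the original sequence. -/
theorem stmt_2 {d : ℕ} (ϱ : ℝ) (hϱ : 0 < ϱ)
    (μ : ℕ → Measure (EuclideanSpace ℝ (Fin d)))
    (hprob : ∀ n, IsProbabilityMeasure (μ n))
    (hUI : Filter.Tendsto
      (fun k : ℕ => ⨆ n : ℕ,
        ∫ y in {y : EuclideanSpace ℝ (Fin d) | (k : ℝ) ≤ ‖y‖}, ‖y‖ ^ 2 ∂(mconv (μ n) (gaussPi d ϱ)))
      Filter.atTop (nhds 0)) :
    Filter.Tendsto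
      (fun k : ℕ => ⨆ n : ℕ,
        ∫ x in {x : EuclideanSpace ℝ (Fin d) | (k : ℝ) ≤ ‖x‖}, ‖x‖ ^ 2 ∂(μ n))
      Filter.atTop (nhds 0) :=
  stmt_2_general ϱ μ hprob hUI
end

section
/- Let μ, ν be probability measures on ℝ with finite second moment, with cumulative distribution functions F_μ and F_ν. Then W₂(μ,ν)² ≤ 4 ∫_{-∞}^{+∞} |x| · |F_μ(x) − F_ν(x)| dx. -/
/-!
Couple `μ` and `ν` through their quantile functions: for `t` uniform on `(0, 1)`, the pair
`(q_μ t, q_ν t)` has marginals `μ` and `ν`, so `W₂² ≤ ∫₀¹ (q_μ t - q_ν t)² dt`. Pointwise,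
`(a - b)² ≤ 4 ∫_{[a, b]} |x| dx`. Since `q_μ t ≤ x ↔ t ≤ F_μ x`, the point `x` lies between
`q_μ t` and `q_ν t` exactly when `t` lies between `F_μ x` and `F_ν x`; by Tonelli,
`∫₀¹ ∫_{[q_μ t, q_ν t]} |x| dx dt = ∫ |x| |F_μ x - F_ν x| dx`. The inner integral is at most
`(a² + b²) / 2`, which makes both sides finite under the second moment assumptions.
-/

open MeasureTheory

open Set Filter ProbabilityTheory
open scoped ENNReal Interval symmDiff

section Wasserstein

variable {E : Type*} [NormedAddCommGroup E] [MeasurableSpace E]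

lemma W2sq_nonneg (μ ν : Measure E) : 0 ≤ W2sq μ ν :=
  Real.sInf_nonneg <| by
    rintro r ⟨π, -, -, rfl⟩
    exact integral_nonneg fun _ => by positivity

lemma W2sq_le_integral {μ ν : Measure E} (π : Measure (E × E)) (h₁ : π.map Prod.fst = μ)
    (h₂ : π.map Prod.snd = ν) : W2sq μ ν ≤ ∫ p, ‖p.1 - p.2‖ ^ 2 ∂π := by
  refine csInf_le ⟨0, ?_⟩ ⟨π, h₁, h₂, rfl⟩
  rintro r ⟨π, -, -, rfl⟩
  exact integral_nonneg fun _ => by positivity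

end Wasserstein

section Intervals

variable {α : Type*} [LinearOrder α]

lemma Set.Iic_symmDiff_Iic (a b : α) : Iic a ∆ Iic b = Ioc (a ⊓ b) (a ⊔ b) := by
  ext x
  simp only [mem_symmDiff, mem_Iic, mem_Ioc, inf_lt_iff, le_sup_iff]
  grind

lemma Set.Ici_symmDiff_Ici (a b : α) : Ici a ∆ Ici b = Ico (a ⊓ b) (a ⊔ b) := by
  ext x
  simp only [mem_symmDiff, mem_Ici, mem_Ico, inf_le_iff, lt_sup_iff]
  grind

end Intervals

lemma Real.volume_Ioc_inter_Ioo_zero_one {a b : ℝ} (ha : 0 ≤ a) (hb : b ≤ 1) :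
    volume (Ioc a b ∩ Ioo 0 1) = ENNReal.ofReal (b - a) := by
  rw [measure_congr ((ae_eq_refl _).inter Ioo_ae_eq_Ioc), Ioc_inter_Ioc, sup_eq_left.2 ha,
    inf_eq_left.2 hb, Real.volume_Ioc]

lemma hasDerivAt_mul_abs (x : ℝ) : HasDerivAt (fun y => y * |y|) (2 * |x|) x := by
  rcases lt_trichotomy x 0 with hx | rfl | hx
  · refine (((hasDerivAt_id x).mul (hasDerivAt_id x)).neg.congr_deriv ?_).congr_of_eventuallyEq ?_
    · rw [abs_of_neg hx, id]; ring
    · filter_upwards [eventually_lt_nhds hx] with y hy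
      simp [abs_of_neg hy]
  · rw [hasDerivAt_iff_tendsto_slope_zero, abs_zero, mul_zero, mul_zero]
    refine ((continuous_abs.tendsto' (0 : ℝ) 0 abs_zero).mono_left nhdsWithin_le_nhds).congr' ?_
    filter_upwards [self_mem_nhdsWithin] with t ht
    rw [zero_add, sub_zero, smul_eq_mul, inv_mul_cancel_left₀ ht]
  · refine (((hasDerivAt_id x).mul (hasDerivAt_id x)).congr_deriv ?_).congr_of_eventuallyEq ?_
    · rw [abs_of_pos hx, id]; ring
    · filter_upwards [eventually_gt_nhds hx] with y hy
      simp [abs_of_pos hy]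

lemma integral_uIoc_abs (a b : ℝ) : ∫ x in Ι a b, |x| = |(a * |a| - b * |b|)| / 2 := by
  have hFTC : ∫ x in b..a, |x| = (a * |a| - b * |b|) / 2 := by
    rw [intervalIntegral.integral_eq_sub_of_hasDerivAt (f := fun y => y * |y| / 2)
      (fun x _ => by simpa using (hasDerivAt_mul_abs x).div_const 2)
      (continuous_abs.intervalIntegrable b a)]
    ring
  rw [← abs_of_nonneg (integral_nonneg fun x => abs_nonneg x), uIoc_comm,
    ← intervalIntegral.abs_integral_eq_abs_integral_uIoc, hFTC, abs_div, abs_two]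

lemma sq_sub_le_four_mul_integral_uIoc_abs (a b : ℝ) : (a - b) ^ 2 ≤ 4 * ∫ x in Ι a b, |x| := by
  wlog hba : b ≤ a generalizing a b
  · rw [uIoc_comm, ← neg_sub, neg_sq]
    exact this b a (le_of_not_ge hba)
  rw [integral_uIoc_abs]
  refine le_trans ?_ (mul_le_mul_of_nonneg_left (div_le_div_of_nonneg_right (le_abs_self _)
    zero_le_two) zero_le_four)
  rcases le_total 0 b with hb | hb
  · rw [abs_of_nonneg hb, abs_of_nonneg (hb.trans hba)]
    nlinarith
  · rcases le_total 0 a with ha | ha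
    · rw [abs_of_nonpos hb, abs_of_nonneg ha]
      nlinarith [sq_nonneg (a + b)]
    · rw [abs_of_nonpos hb, abs_of_nonpos ha]
      nlinarith

lemma integral_uIoc_abs_le (a b : ℝ) : ∫ x in Ι a b, |x| ≤ (a ^ 2 + b ^ 2) / 2 := by
  rw [integral_uIoc_abs]
  have := abs_sub (a * |a|) (b * |b|)
  rw [abs_mul, abs_abs, abs_mul_abs_self, abs_mul, abs_abs, abs_mul_abs_self] at this
  nlinarith

namespace ProbabilityTheory

/-- Outside `(0, 1)` the set can be empty or unbounded below, and `sInf` returns the junk value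
`0`. -/
noncomputable def quantile (μ : Measure ℝ) (t : ℝ) : ℝ := sInf {x | t ≤ cdf μ x}

variable (μ ν : Measure ℝ)

lemma nonempty_setOf_le_cdf {t : ℝ} (ht : t < 1) : {x | t ≤ cdf μ x}.Nonempty :=
  let ⟨x, hx⟩ := ((tendsto_cdf_atTop μ).eventually_const_lt ht).exists
  ⟨x, hx.le⟩

lemma bddBelow_setOf_le_cdf {t : ℝ} (ht : 0 < t) : BddBelow {x | t ≤ cdf μ x} := by
  obtain ⟨x₀, hx₀⟩ := ((tendsto_cdf_atBot μ).eventually_lt_const ht).exists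
  exact ⟨x₀, fun y hy => le_of_not_gt fun hlt => (hy.trans (monotone_cdf μ hlt.le)).not_gt hx₀⟩

lemma quantile_le_iff {t x : ℝ} (ht : t ∈ Ioo 0 1) : quantile μ t ≤ x ↔ t ≤ cdf μ x := by
  refine ⟨fun h => ?_, fun h => csInf_le (bddBelow_setOf_le_cdf μ ht.1) h⟩
  have hright : ∀ y, x < y → t ≤ cdf μ y := fun y hy =>
    let ⟨z, hz, hzy⟩ := exists_lt_of_csInf_lt (nonempty_setOf_le_cdf μ ht.2) (h.trans_lt hy)
    hz.trans (monotone_cdf μ hzy.le)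
  exact ge_of_tendsto (((cdf μ).right_continuous x).mono Ioi_subset_Ici_self)
    (eventually_nhdsWithin_of_forall hright)

lemma setOf_le_cdf_eq_Ici {t : ℝ} (ht : t ∈ Ioo 0 1) : {x | t ≤ cdf μ x} = Ici (quantile μ t) :=
  ext fun _ => (quantile_le_iff μ ht).symm

lemma monotoneOn_quantile : MonotoneOn (quantile μ) (Ioo 0 1) := fun _ ha _ hb hab =>
  (quantile_le_iff μ ha).2 (hab.trans ((quantile_le_iff μ hb).1 le_rfl))

lemma aemeasurable_quantile : AEMeasurable (quantile μ) (volume.restrict (Ioo 0 1)) :=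
  aemeasurable_restrict_of_monotoneOn measurableSet_Ioo (monotoneOn_quantile μ)

lemma map_quantile [IsProbabilityMeasure μ] :
    (volume.restrict (Ioo 0 1)).map (quantile μ) = μ := by
  refine Measure.ext_of_Iic _ _ fun x => ?_
  have hpre : quantile μ ⁻¹' Iic x ∩ Ioo 0 1 = Ioc 0 (cdf μ x) ∩ Ioo 0 1 := by
    ext t
    simp only [mem_inter_iff, mem_preimage, mem_Iic, mem_Ioc]
    exact ⟨fun ⟨h, ht⟩ => ⟨⟨ht.1, (quantile_le_iff μ ht).1 h⟩, ht⟩,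
      fun ⟨h, ht⟩ => ⟨(quantile_le_iff μ ht).2 h.2, ht⟩⟩
  rw [Measure.map_apply_of_aemeasurable (aemeasurable_quantile μ) measurableSet_Iic,
    Measure.restrict_apply' measurableSet_Ioo, hpre,
    Real.volume_Ioc_inter_Ioo_zero_one le_rfl (cdf_le_one μ x), sub_zero, ofReal_cdf]

lemma integrable_sq_quantile [IsProbabilityMeasure μ] (h : Integrable (fun x => x ^ 2) μ) :
    Integrable (fun t => quantile μ t ^ 2) (volume.restrict (Ioo 0 1)) := by
  rw [← map_quantile μ] at h
  exact (integrable_map_measure (by fun_prop) (aemeasurable_quantile μ)).1 h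

lemma W2sq_le_integral_sq_quantile_sub [IsProbabilityMeasure μ] [IsProbabilityMeasure ν] :
    W2sq μ ν ≤ ∫ t in Ioo 0 1, (quantile μ t - quantile ν t) ^ 2 := by
  have hpair := (aemeasurable_quantile μ).prodMk (aemeasurable_quantile ν)
  refine (W2sq_le_integral ((volume.restrict (Ioo 0 1)).map fun t => (quantile μ t, quantile ν t))
    ?_ ?_).trans_eq ?_
  · rw [AEMeasurable.map_map_of_aemeasurable measurable_fst.aemeasurable hpair]
    exact map_quantile μ
  · rw [AEMeasurable.map_map_of_aemeasurable measurable_snd.aemeasurable hpair]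
    exact map_quantile ν
  · rw [integral_map hpair (by fun_prop)]
    simp only [Real.norm_eq_abs, sq_abs]

lemma lintegral_abs_mul_abs_cdf_sub :
    ∫⁻ x, ENNReal.ofReal (|x| * |cdf μ x - cdf ν x|) =
      ∫⁻ t in Ioo 0 1, ENNReal.ofReal (∫ x in Ι (quantile μ t) (quantile ν t), |x|) := by
  set D : Set (ℝ × ℝ) := {p | p.1 ≤ cdf μ p.2} ∆ {p | p.1 ≤ cdf ν p.2}
  have hD : MeasurableSet D :=
    (measurableSet_le measurable_fst ((monotone_cdf μ).measurable.comp measurable_snd)).symmDiff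
      (measurableSet_le measurable_fst ((monotone_cdf ν).measurable.comp measurable_snd))
  set f := D.indicator fun p => ENNReal.ofReal |p.2|
  have hf : Measurable f := (measurable_snd.abs.ennreal_ofReal).indicator hD
  have hsection_t (x : ℝ) :
      ∫⁻ t in Ioo 0 1, f (t, x) = ENNReal.ofReal (|x| * |cdf μ x - cdf ν x|) := by
    change ∫⁻ t in Ioo 0 1,
      (Iic (cdf μ x) ∆ Iic (cdf ν x)).indicator (fun _ => ENNReal.ofReal |x|) t = _
    rw [lintegral_indicator_const (measurableSet_Iic.symmDiff measurableSet_Iic),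
      Measure.restrict_apply (measurableSet_Iic.symmDiff measurableSet_Iic), Iic_symmDiff_Iic,
      Real.volume_Ioc_inter_Ioo_zero_one (le_inf (cdf_nonneg μ x) (cdf_nonneg ν x))
        (sup_le (cdf_le_one μ x) (cdf_le_one ν x)), ← ENNReal.ofReal_mul (abs_nonneg x),
      max_sub_min_eq_abs']
  have hsection_x (t : ℝ) (ht : t ∈ Ioo 0 1) :
      ∫⁻ x, f (t, x) = ENNReal.ofReal (∫ x in Ι (quantile μ t) (quantile ν t), |x|) := by
    change ∫⁻ x,
      ({x | t ≤ cdf μ x} ∆ {x | t ≤ cdf ν x}).indicator (fun x => ENNReal.ofReal |x|) x = _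
    rw [setOf_le_cdf_eq_Ici μ ht, setOf_le_cdf_eq_Ici ν ht, Ici_symmDiff_Ici,
      lintegral_indicator measurableSet_Ico, Measure.restrict_congr_set Ico_ae_eq_Ioc,
      ← ofReal_integral_eq_lintegral_ofReal (continuous_abs.integrableOn_Ioc)
        (ae_of_all _ fun x => abs_nonneg x)]
    rfl
  calc ∫⁻ x, ENNReal.ofReal (|x| * |cdf μ x - cdf ν x|)
      = ∫⁻ x, ∫⁻ t in Ioo 0 1, f (t, x) := lintegral_congr fun x => (hsection_t x).symm
    _ = ∫⁻ t in Ioo 0 1, ∫⁻ x, f (t, x) :=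
      lintegral_lintegral_swap (hf.comp measurable_swap).aemeasurable
    _ = _ := setLIntegral_congr_fun measurableSet_Ioo hsection_x

lemma lintegral_sq_quantile_sub_le :
    ∫⁻ t in Ioo 0 1, ENNReal.ofReal ((quantile μ t - quantile ν t) ^ 2) ≤
      4 * ∫⁻ x, ENNReal.ofReal (|x| * |cdf μ x - cdf ν x|) := by
  rw [lintegral_abs_mul_abs_cdf_sub, ← lintegral_const_mul' _ _ ENNReal.ofNat_ne_top]
  refine lintegral_mono fun t => ?_
  rw [← ENNReal.ofReal_ofNat, ← ENNReal.ofReal_mul zero_le_four]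
  exact ENNReal.ofReal_le_ofReal (sq_sub_le_four_mul_integral_uIoc_abs _ _)

lemma lintegral_abs_mul_abs_cdf_sub_lt_top [IsProbabilityMeasure μ] [IsProbabilityMeasure ν]
    (hμ : Integrable (fun x => x ^ 2) μ) (hν : Integrable (fun x => x ^ 2) ν) :
    ∫⁻ x, ENNReal.ofReal (|x| * |cdf μ x - cdf ν x|) < ∞ := by
  rw [lintegral_abs_mul_abs_cdf_sub]
  refine (lintegral_mono fun t => ENNReal.ofReal_le_ofReal (integral_uIoc_abs_le _ _)).trans_lt ?_
  exact (((integrable_sq_quantile μ hμ).add (integrable_sq_quantile ν hν)).div_const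
    2).lintegral_lt_top

lemma integral_sq_quantile_sub_le [IsProbabilityMeasure μ] [IsProbabilityMeasure ν]
    (hμ : Integrable (fun x => x ^ 2) μ) (hν : Integrable (fun x => x ^ 2) ν) :
    ∫ t in Ioo 0 1, (quantile μ t - quantile ν t) ^ 2 ≤
      4 * ∫ x, |x| * |cdf μ x - cdf ν x| := by
  rw [integral_eq_lintegral_of_nonneg_ae (f := fun t => (quantile μ t - quantile ν t) ^ 2)
      (ae_of_all _ fun _ => sq_nonneg _)
      (((aemeasurable_quantile μ).sub (aemeasurable_quantile ν)).pow_const 2).aestronglyMeasurable,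
    integral_eq_lintegral_of_nonneg_ae (f := fun x => |x| * |cdf μ x - cdf ν x|)
      (ae_of_all _ fun _ => by positivity)
      (measurable_abs.mul ((monotone_cdf μ).measurable.sub
        (monotone_cdf ν).measurable).abs).aestronglyMeasurable,
    ← ENNReal.toReal_ofNat, ← ENNReal.toReal_mul]
  exact ENNReal.toReal_mono
    (ENNReal.mul_ne_top ENNReal.ofNat_ne_top (lintegral_abs_mul_abs_cdf_sub_lt_top μ ν hμ hν).ne)
    (lintegral_sq_quantile_sub_le μ ν)

end ProbabilityTheory

/-- One-dimensional upper bound for the squared 2-Wasserstein distance in terms of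
cumulative distribution functions. -/
theorem stmt_5 (μ ν : Measure ℝ) [IsProbabilityMeasure μ] [IsProbabilityMeasure ν]
    (hμ : Integrable (fun x => x ^ 2) μ) (hν : Integrable (fun x => x ^ 2) ν) :
    (W2 μ ν) ^ 2 ≤
      4 * ∫ x : ℝ, |x| * |(μ (Set.Iic x)).toReal - (ν (Set.Iic x)).toReal| := by
  simp only [← measureReal_def, ← cdf_eq_real]
  rw [W2, Real.sq_sqrt (W2sq_nonneg μ ν)]
  exact (W2sq_le_integral_sq_quantile_sub μ ν).trans (integral_sq_quantile_sub_le μ ν hμ hν)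
end
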